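/- Let ε > 0 and let L ≥ 3 be an integer with 2ε < 1/L. Then ⌈log(1/(Lε))⌉ + 2L − 4 ≤ N*(ε, 1/L, L) ≤ ⌈log(1/(Lε))⌉ + 2L. -/

import Mathlib

open Set

/-- A learner strategy of length `N` with seed space `Fin Y` (representing `{1,…,𝒴}`):
query functions mapping previous responses and the seed to a query in `[0,1)`,
and an estimation function mapping all responses and the seed to an estimate in `[0,1)`. -/
structure Strategy (N Y : ℕ) where
  query : (k : Fin N) → (Fin (k : ℕ) → Bool) → Fin Y → ℝ
  estimate : (Fin N → Bool) → Fin Y → ℝ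
  query_mem : ∀ k h y, query k h y ∈ Set.Ico (0 : ℝ) 1
  estimate_mem : ∀ r y, estimate r y ∈ Set.Ico (0 : ℝ) 1

namespace Strategy

variable {N Y : ℕ}

/-- The first `k` responses when the true value is `x` and the seed is `y`:
`r_k = 1` iff `x ≥ q_k`. -/
noncomputable def resps (φ : Strategy N Y) (x : ℝ) (y : Fin Y) : (k : ℕ) → Fin k → Bool
  | 0 => Fin.elim0
  | k + 1 => fun i =>
      if h : (i : ℕ) < k then resps φ x y k ⟨i, h⟩
      else if hk : k < N then decide (φ.query ⟨k, hk⟩ (resps φ x y k) y ≤ x)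
      else false

/-- The query sequence `q̄(x,y)`. -/
noncomputable def queries (φ : Strategy N Y) (x : ℝ) (y : Fin Y) : Fin N → ℝ :=
  fun k => φ.query k (resps φ x y (k : ℕ)) y

/-- The learner's estimate `x̂(x,y)`. -/
noncomputable def estim (φ : Strategy N Y) (x : ℝ) (y : Fin Y) : ℝ :=
  φ.estimate (resps φ x y N) y

/-- `Q(x)`: the set of query sequences that can arise when the true value is `x`. -/
def Q (φ : Strategy N Y) (x : ℝ) : Set (Fin N → ℝ) :=
  {q | ∃ y : Fin Y, φ.queries x y = q}

/-- The information set `I(q̄)` of the adversary. -/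
def infoSet (φ : Strategy N Y) (q : Fin N → ℝ) : Set ℝ :=
  {x | x ∈ Set.Ico (0 : ℝ) 1 ∧ q ∈ φ.Q x}

/-- The accuracy constraint with parameter `ε`. -/
def Accurate (ε : ℝ) (φ : Strategy N Y) : Prop :=
  ∀ x ∈ Set.Ico (0 : ℝ) 1, ∀ y : Fin Y, |φ.estim x y - x| ≤ ε / 2

end Strategy

/-- `E` is `(δ,L)`-coverable: `E` is contained in the union of `L` closed intervals
of length at most `δ` each. -/
def Coverable (δ : ℝ) (L : ℕ) (E : Set ℝ) : Prop :=
  ∃ a b : Fin L → ℝ, (∀ j, b j - a j ≤ δ) ∧ E ⊆ ⋃ j, Set.Icc (a j) (b j)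

/-- The `δ`-cover number `C_δ(E)`: the least positive `L` such that `E` is `(δ,L)`-coverable. -/
noncomputable def coverNumber (δ : ℝ) (E : Set ℝ) : ℕ :=
  sInf {L : ℕ | 0 < L ∧ Coverable δ L E}

/-- An `(ε,δ,L)`-private learner strategy. -/
def IsPrivate (ε δ : ℝ) (L : ℕ) {N Y : ℕ} (φ : Strategy N Y) : Prop :=
  φ.Accurate ε ∧ ∀ x ∈ Set.Ico (0 : ℝ) 1, ∀ q ∈ φ.Q x, L ≤ coverNumber δ (φ.infoSet q)

/-- `N*(ε,δ,L)`: the least length for which an `(ε,δ,L)`-private strategy exists. -/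
noncomputable def Nstar (ε δ : ℝ) (L : ℕ) : ℕ :=
  sInf {N : ℕ | ∃ Y : ℕ, 0 < Y ∧ ∃ φ : Strategy N Y, IsPrivate ε δ L φ}

/-!
Upper bound: the learner first asks the `L - 1` cell boundaries `(i + 1) / L` and the `L` points
`(j + 1) / L - ε`, the same for every `x`, and then bisects for `M = ⌈log (1 / (L ε))⌉` steps.
If `x` lies in the sliver `[(j + 1) / L - ε, (j + 1) / L)` of its cell it already knows `x` up to
`ε`, and instead bisects a cell and follows answers both taken from the seed. So every query
sequence is also produced by all points of every sliver; the information set accumulates at the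
`L` points `(j + 1) / L` and cannot be covered by fewer than `L` intervals of length `1 / L`.

Lower bound: accuracy makes every interval of points with identical answers shorter than `ε`.
An adversary keeping the longer half of `[1 - 1 / L, 1)` at every split thus forces `M` queries
inside that interval. The information set of the resulting query sequence needs `L` intervals,
so it contains `L - 1` points with gaps larger than `2 ε`, the last below `1 - 1 / L`; the short
cells around them are bounded by queries, two in each gap, giving `2 L - 4` more queries.
-/

open Set Filter Topology

theorem exists_half_Ico_notMem {a b q : ℝ} (hq : q ∈ Ioo a b) :
    ∃ c d, a ≤ c ∧ c < d ∧ d ≤ b ∧ q ∉ Ioo c d ∧ b - a ≤ 2 * (d - c) := by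
  rcases le_total (b - q) (q - a) with h | h
  · exact ⟨a, q, le_rfl, hq.1, hq.2.le, fun h => h.2.false, by linarith⟩
  · exact ⟨q, b, hq.1.le, hq.2, le_rfl, fun h => h.1.false, by linarith⟩

def extendFalse {n : ℕ} (h : Fin n → Bool) : ℕ → Bool :=
  fun i => if hi : i < n then h ⟨i, hi⟩ else false

namespace Strategy

variable {N Y : ℕ} (φ : Strategy N Y) {x x' : ℝ} {y : Fin Y}

theorem resps_succ (k : ℕ) :
    φ.resps x y (k + 1) = Fin.snoc (φ.resps x y k)
      (if hk : k < N then decide (φ.query ⟨k, hk⟩ (φ.resps x y k) y ≤ x) else false) := by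
  funext i
  induction i using Fin.lastCases with
  | last => simp [resps]
  | cast j => simp [resps]

theorem resps_succ_of_lt {k : ℕ} (hk : k < N) :
    φ.resps x y (k + 1) = Fin.snoc (φ.resps x y k) (decide (φ.queries x y ⟨k, hk⟩ ≤ x)) := by
  rw [resps_succ, dif_pos hk]
  rfl

theorem resps_castLE {k k' : ℕ} (h : k ≤ k') (i : Fin k) :
    φ.resps x y k' (Fin.castLE h i) = φ.resps x y k i := by
  induction k', h using Nat.le_induction with
  | base => rfl
  | succ m hkm ih =>
    rw [resps_succ, ← ih, show Fin.castLE _ i = Fin.castSucc (Fin.castLE hkm i) from rfl,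
      Fin.snoc_castSucc]

theorem resps_eq_of_le {k k' : ℕ} (h : φ.resps x y k' = φ.resps x' y k') (hk : k ≤ k') :
    φ.resps x y k = φ.resps x' y k := by
  funext i
  rw [← resps_castLE φ hk, h, resps_castLE]

theorem queries_eq_of_resps_eq {k : ℕ} (h : φ.resps x y k = φ.resps x' y k) {j : Fin N}
    (hj : (j : ℕ) ≤ k) : φ.queries x y j = φ.queries x' y j := by
  simp only [queries, φ.resps_eq_of_le h hj]

theorem resps_succ_eq_of_forall_mem_Ico {c d : ℝ} {k : ℕ} (hk : k < N)
    (hsame : ∀ z ∈ Ico c d, φ.resps z y k = φ.resps c y k)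
    (hq : φ.queries c y ⟨k, hk⟩ ∉ Ioo c d) :
    ∀ z ∈ Ico c d, φ.resps z y (k + 1) = φ.resps c y (k + 1) := by
  intro z hz
  rw [resps_succ_of_lt φ hk, resps_succ_of_lt φ hk, hsame z hz,
    φ.queries_eq_of_resps_eq (hsame z hz) le_rfl]
  congr 1
  simp only [mem_Ioo, not_and_or, not_lt] at hq
  rcases hq with hq | hq
  · simp [hq, hq.trans hz.1]
  · have hz' : z < _ := hz.2.trans_le hq
    have hc' : c < _ := (hz.1.trans_lt hz.2).trans_le hq
    simp [not_le.mpr hz', not_le.mpr hc']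

theorem resps_eq_of_forall_queries_notMem {u v : ℝ} (hx : x ∈ Ico u v)
    (hq : ∀ j, φ.queries x y j ∉ Ioo u v) :
    ∀ z ∈ Ico u v, φ.resps z y N = φ.resps u y N := by
  suffices ∀ k ≤ N, ∀ z ∈ Ico u v, φ.resps z y k = φ.resps u y k from this N le_rfl
  intro k hk
  induction k with
  | zero => exact fun _ _ => Subsingleton.elim _ _
  | succ k ih =>
    have ih := ih (by omega)
    refine φ.resps_succ_eq_of_forall_mem_Ico (by omega) ih ?_
    rw [← φ.queries_eq_of_resps_eq (ih x hx) le_rfl]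
    exact hq _

theorem Accurate.sub_le {ε : ℝ} {φ : Strategy N Y} (hacc : φ.Accurate ε) {u v : ℝ}
    (huv : u < v) (hu : 0 ≤ u) (hv : v ≤ 1)
    (h : ∀ z ∈ Ico u v, φ.resps z y N = φ.resps u y N) : v - u ≤ ε := by
  have hz : ∀ z ∈ Ico u v, |z - u| ≤ ε := fun z hz => by
    have hzu : φ.estim z y = φ.estim u y := by simp only [estim, h z hz]
    have h1 := hacc z ⟨hu.trans hz.1, hz.2.trans_le hv⟩ y
    have h2 := hacc u ⟨hu, huv.trans_le hv⟩ y
    rw [hzu] at h1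
    calc |z - u| ≤ |φ.estim u y - z| + |φ.estim u y - u| := by
          rw [abs_sub_comm (φ.estim u y) z]; exact abs_sub_le _ _ _
      _ ≤ ε := by linarith
  have hε : 0 ≤ ε := (abs_nonneg _).trans (hz u ⟨le_rfl, huv⟩)
  by_contra! hlt
  have := hz ((u + ε + v) / 2) ⟨by linarith, by linarith⟩
  rw [abs_le] at this
  linarith [this.2]

/-- Adversary argument: whenever the `k`-th query splits the current interval, keep the longer
half; `S` records the splitting queries. -/
theorem exists_Ico_resps_eq_of_le (y : Fin Y) {a b : ℝ} (hab : a < b) {k : ℕ} (hk : k ≤ N) :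
    ∃ c d : ℝ, ∃ S : Finset (Fin N), a ≤ c ∧ c < d ∧ d ≤ b ∧
      (∀ z ∈ Ico c d, φ.resps z y k = φ.resps c y k) ∧
      (∀ j ∈ S, (j : ℕ) < k ∧ φ.queries c y j ∈ Ioo a b) ∧ b - a ≤ (d - c) * 2 ^ S.card := by
  induction k with
  | zero => exact ⟨a, b, ∅, le_rfl, hab, le_rfl, fun _ _ => Subsingleton.elim _ _, by simp, by simp⟩
  | succ k ih =>
    obtain ⟨c, d, S, hac, hcd, hdb, hsame, hS, hlen⟩ := ih (by omega)
    have hkN : k < N := by omega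
    by_cases hq : φ.queries c y ⟨k, hkN⟩ ∈ Ioo c d
    · obtain ⟨c', d', hcc', hc'd', hd'd, hq', hhalf⟩ := exists_half_Ico_notMem hq
      have hc' : φ.resps c' y k = φ.resps c y k := hsame c' ⟨hcc', hc'd'.trans_le hd'd⟩
      have hsame' : ∀ z ∈ Ico c' d', φ.resps z y k = φ.resps c' y k := fun z hz =>
        (hsame z ⟨hcc'.trans hz.1, hz.2.trans_le hd'd⟩).trans hc'.symm
      have hqc' := φ.queries_eq_of_resps_eq hc' (j := ⟨k, hkN⟩) le_rfl
      have hkS : (⟨k, hkN⟩ : Fin N) ∉ S := fun h => (hS _ h).1.false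
      refine ⟨c', d', insert ⟨k, hkN⟩ S, by linarith, hc'd', by linarith,
        φ.resps_succ_eq_of_forall_mem_Ico hkN hsame' (hqc' ▸ hq'), ?_, ?_⟩
      · intro j hj
        rcases Finset.mem_insert.1 hj with rfl | hj
        · exact ⟨Nat.lt_succ_self k, hqc' ▸ ⟨hac.trans_lt hq.1, hq.2.trans_le hdb⟩⟩
        · obtain ⟨hjk, hjq⟩ := hS j hj
          exact ⟨by omega, by rwa [φ.queries_eq_of_resps_eq hc' hjk.le]⟩
      · rw [Finset.card_insert_of_notMem hkS, pow_succ]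
        nlinarith [pow_pos (two_pos (α := ℝ)) S.card]
    · exact ⟨c, d, S, hac, hcd, hdb, φ.resps_succ_eq_of_forall_mem_Ico hkN hsame hq,
        fun j hj => ⟨(hS j hj).1.trans (Nat.lt_succ_self k), (hS j hj).2⟩, hlen⟩

theorem Accurate.exists_queries_mem_Ioo {ε : ℝ} {φ : Strategy N Y} (hacc : φ.Accurate ε)
    (y : Fin Y) {a b : ℝ} (ha : 0 ≤ a) (hab : a < b) (hb : b ≤ 1) :
    ∃ c ∈ Ico a b, ∃ S : Finset (Fin N),
      (∀ j ∈ S, φ.queries c y j ∈ Ioo a b) ∧ b - a ≤ ε * 2 ^ S.card := by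
  obtain ⟨c, d, S, hac, hcd, hdb, hsame, hS, hlen⟩ := φ.exists_Ico_resps_eq_of_le y hab le_rfl
  have := hacc.sub_le hcd (ha.trans hac) (hdb.trans hb) hsame
  exact ⟨c, ⟨hac, hcd.trans_le hdb⟩, S, fun j hj => (hS j hj).2,
    hlen.trans (by gcongr)⟩

theorem Accurate.exists_cell {ε : ℝ} {φ : Strategy N Y} (hacc : φ.Accurate ε) {e : ℝ}
    (he : e ∈ Ico (0 : ℝ) 1) (y : Fin Y) :
    ∃ u v, u ≤ e ∧ e < v ∧ v - u ≤ ε ∧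
      (u = 0 ∨ u ∈ range (φ.queries e y)) ∧ (v = 1 ∨ v ∈ range (φ.queries e y)) := by
  classical
  set Q := Finset.univ.image (φ.queries e y)
  set U := insert 0 (Q.filter (· ≤ e))
  set V := insert 1 (Q.filter (e < ·))
  have hU : U.Nonempty := Finset.insert_nonempty _ _
  have hV : V.Nonempty := Finset.insert_nonempty _ _
  have hue : U.max' hU ≤ e := Finset.max'_le _ _ _ fun w hw => by
    rcases Finset.mem_insert.1 hw with rfl | hw
    exacts [he.1, (Finset.mem_filter.1 hw).2]
  have hev : e < V.min' hV := (Finset.lt_min'_iff _ _).2 fun w hw => by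
    rcases Finset.mem_insert.1 hw with rfl | hw
    exacts [he.2, (Finset.mem_filter.1 hw).2]
  have hq : ∀ j, φ.queries e y j ∉ Ioo (U.max' hU) (V.min' hV) := fun j hj => by
    have hjQ : φ.queries e y j ∈ Q := Finset.mem_image_of_mem _ (Finset.mem_univ j)
    rcases le_or_gt (φ.queries e y j) e with h | h
    · exact hj.1.not_ge (U.le_max' _ (Finset.mem_insert_of_mem (Finset.mem_filter.2 ⟨hjQ, h⟩)))
    · exact hj.2.not_ge (V.min'_le _ (Finset.mem_insert_of_mem (Finset.mem_filter.2 ⟨hjQ, h⟩)))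
  have hmem : ∀ {p : ℝ → Prop} [DecidablePred p] {w₀ w : ℝ},
      w ∈ insert w₀ (Q.filter p) → w = w₀ ∨ w ∈ range (φ.queries e y) := fun hw => by
    rcases Finset.mem_insert.1 hw with h | h
    · exact Or.inl h
    · obtain ⟨j, -, hj⟩ := Finset.mem_image.1 (Finset.mem_filter.1 h).1
      exact Or.inr ⟨j, hj⟩
  refine ⟨U.max' hU, V.min' hV, hue, hev, hacc.sub_le (hue.trans_lt hev)
    (U.le_max' 0 (Finset.mem_insert_self _ _)) (V.min'_le 1 (Finset.mem_insert_self _ _))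
    (φ.resps_eq_of_forall_queries_notMem ⟨hue, hev⟩ hq),
    hmem (U.max'_mem hU), hmem (V.min'_mem hV)⟩

/-- `q j` is the right end of the cell of `e`, `q j'` the left end of the cell of `e'`. -/
theorem Accurate.exists_queries_between {ε : ℝ} {φ : Strategy N Y} (hacc : φ.Accurate ε)
    {q : Fin N → ℝ} {e e' : ℝ} (he : e ∈ φ.infoSet q) (he' : e' ∈ φ.infoSet q)
    (hee' : e + 2 * ε < e') : ∃ j j', e < q j ∧ q j < q j' ∧ q j' ≤ e' := by
  obtain ⟨y, rfl⟩ := he.2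
  obtain ⟨y', hy'⟩ := he'.2
  obtain ⟨u, v, hue, hev, huv, -, hv⟩ := hacc.exists_cell he.1 y
  obtain ⟨u', v', hue', hev', huv', hu', -⟩ := hacc.exists_cell he'.1 y'
  have hε : 0 ≤ ε := by linarith
  obtain ⟨j, rfl⟩ := hv.resolve_left (by linarith [he'.1.2])
  rw [hy'] at hu'
  obtain ⟨j', rfl⟩ := hu'.resolve_left (by linarith [he.1.1])
  exact ⟨j, j', hev, by linarith, hue'⟩

noncomputable def respSeq (x : ℝ) (y : Fin Y) : ℕ → Bool := extendFalse (φ.resps x y N)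

theorem extendFalse_resps {i k : ℕ} (hik : i < k) (hk : k ≤ N) :
    extendFalse (φ.resps x y k) i = φ.respSeq x y i := by
  simp only [respSeq, extendFalse, dif_pos hik, dif_pos (hik.trans_le hk)]
  exact (φ.resps_castLE hk ⟨i, hik⟩).symm

theorem respSeq_of_lt {k : ℕ} (hk : k < N) :
    φ.respSeq x y k = decide (φ.queries x y ⟨k, hk⟩ ≤ x) := by
  rw [← φ.extendFalse_resps k.lt_succ_self hk, extendFalse, dif_pos k.lt_succ_self,
    resps_succ_of_lt φ hk]
  exact Fin.snoc_last (α := fun _ => Bool) ..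

end Strategy

theorem coverable_of_subset_Ico {L : ℕ} (hL : 0 < L) {E : Set ℝ} (hE : E ⊆ Ico 0 1) :
    Coverable (1 / L) L E := by
  have hL' : (0 : ℝ) < L := Nat.cast_pos.2 hL
  refine ⟨fun j => j / L, fun j => (j + 1) / L, fun j => by rw [← sub_div]; simp, ?_⟩
  intro x hx
  obtain ⟨hx0, hx1⟩ := hE hx
  have hLx : 0 ≤ (L : ℝ) * x := by positivity
  have hfl : ⌊(L : ℝ) * x⌋₊ < L := (Nat.floor_lt hLx).2 (by nlinarith)
  refine mem_iUnion.2 ⟨⟨_, hfl⟩, ?_, ?_⟩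
  · rw [div_le_iff₀ hL']
    linarith [Nat.floor_le hLx]
  · rw [le_div_iff₀ hL']
    linarith [Nat.lt_floor_add_one ((L : ℝ) * x)]

theorem exists_lt_le_of_frequently {K : ℕ} {E : Set ℝ} {a b : Fin K → ℝ}
    (hcov : E ⊆ ⋃ i, Icc (a i) (b i)) {p : ℝ} (hp : ∃ᶠ x in 𝓝[<] p, x ∈ E) :
    ∃ i, a i < p ∧ p ≤ b i := by
  have hev : ∀ᶠ x in 𝓝[<] p, x < p ∧ ∀ i, b i < p → b i < x := by
    refine Filter.Eventually.and (self_mem_nhdsWithin (s := Iio p) (a := p))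
      (eventually_all.2 fun i => ?_)
    by_cases h : b i < p
    · filter_upwards [Ioo_mem_nhdsLT h] with x hx _ using hx.1
    · exact Eventually.of_forall fun _ h' => absurd h' h
  obtain ⟨x, hxE, hxp, hb⟩ := (hp.and_eventually hev).exists
  obtain ⟨i, hi⟩ := mem_iUnion.1 (hcov hxE)
  exact ⟨i, hi.1.trans_lt hxp, not_lt.1 fun h => (hb i h).not_ge hi.2⟩

theorem le_coverNumber_of_frequently {δ : ℝ} {E : Set ℝ} {L : ℕ}
    (hE : ∃ K, 0 < K ∧ Coverable δ K E) (p : Fin L → ℝ) (hp : ∀ i j, i < j → p i + δ ≤ p j)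
    (hacc : ∀ j, ∃ᶠ x in 𝓝[<] p j, x ∈ E) : L ≤ coverNumber δ E := by
  refine le_csInf hE fun K ⟨_, a, b, hab, hcov⟩ => ?_
  choose g hg using fun j => exists_lt_le_of_frequently hcov (hacc j)
  have hne : ∀ i j, i < j → g i ≠ g j := fun i j hij h => by
    have := (hg i).1
    rw [h] at this
    linarith [hab (g j), hp i j hij, (hg j).2]
  have hinj : Function.Injective g := fun i j h => by
    by_contra hij
    rcases lt_or_gt_of_ne hij with hij | hij
    exacts [hne i j hij h, hne j i hij h.symm]
  simpa using Fintype.card_le_of_injective g hinj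

/-- `sInf (greedyTail δ E t)` is the left end of the `t`-th interval of the greedy cover of `E`
by intervals `[g, g + δ]`. -/
noncomputable def greedyTail (δ : ℝ) (E : Set ℝ) : ℕ → Set ℝ
  | 0 => E
  | t + 1 => E ∩ Ioi (sInf (greedyTail δ E t) + δ)

section Greedy

variable {δ : ℝ} {E : Set ℝ}

theorem greedyTail_subset (t : ℕ) : greedyTail δ E t ⊆ E := by
  cases t
  exacts [subset_rfl, inter_subset_left]

theorem coverable_of_greedyTail_eq_empty (hE : BddBelow E) {t : ℕ}
    (h : greedyTail δ E (t + 1) = ∅) : Coverable δ (t + 1) E := by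
  have key : ∀ s, ∀ x ∈ E, x ∉ greedyTail δ E (s + 1) →
      ∃ r ≤ s, x ∈ Icc (sInf (greedyTail δ E r)) (sInf (greedyTail δ E r) + δ) := by
    intro s
    induction s with
    | zero => exact fun x hx hx' => ⟨0, le_rfl, csInf_le hE hx, not_lt.1 fun h => hx' ⟨hx, h⟩⟩
    | succ s ih =>
      intro x hx hx'
      by_cases hs : x ∈ greedyTail δ E (s + 1)
      · exact ⟨s + 1, le_rfl, csInf_le (hE.mono (greedyTail_subset _)) hs,
          not_lt.1 fun h => hx' ⟨hx, h⟩⟩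
      · obtain ⟨r, hr, hxr⟩ := ih x hx hs
        exact ⟨r, hr.trans s.le_succ, hxr⟩
  refine ⟨fun r => sInf (greedyTail δ E r), fun r => sInf (greedyTail δ E r) + δ,
    fun r => by simp, fun x hx => ?_⟩
  obtain ⟨r, hr, hxr⟩ := key t x hx (h ▸ notMem_empty x)
  exact mem_iUnion.2 ⟨⟨r, by omega⟩, hxr⟩

theorem exists_mem_greedyTail_lt (hE : BddBelow E) {t : ℕ} (hne : (greedyTail δ E t).Nonempty)
    {γ : ℝ} (hγ : 0 < γ) :
    ∃ x ∈ E, sInf (greedyTail δ E t) ≤ x ∧ x < sInf (greedyTail δ E t) + γ := by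
  obtain ⟨x, hx, hxγ⟩ := Real.lt_sInf_add_pos hne hγ
  exact ⟨x, greedyTail_subset t hx, csInf_le (hE.mono (greedyTail_subset t)) hx, hxγ⟩

theorem exists_separated_of_le_coverNumber {η : ℝ} (hηδ : η < δ) (hE : E ⊆ Ico 0 1) {n : ℕ}
    (hn : n + 2 ≤ coverNumber δ E) :
    ∃ e : ℕ → ℝ, (∀ t ≤ n, e t ∈ E) ∧ (∀ t < n, e t + η < e (t + 1)) ∧ e n < 1 - δ := by
  set g : ℕ → ℝ := fun t => sInf (greedyTail δ E t)
  have hBdd : BddBelow E := ⟨0, fun x hx => (hE hx).1⟩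
  have hne : ∀ t ≤ n, (greedyTail δ E (t + 1)).Nonempty := fun t ht => by
    by_contra h
    have : coverNumber δ E ≤ t + 1 :=
      Nat.sInf_le ⟨t.succ_pos,
        coverable_of_greedyTail_eq_empty hBdd (not_nonempty_iff_eq_empty.1 h)⟩
    omega
  have hgap : ∀ t ≤ n, g t + δ ≤ g (t + 1) := fun t ht => le_csInf (hne t ht) fun x hx => hx.2.le
  have hg1 : g (n + 1) < 1 := by
    obtain ⟨x, hx⟩ := hne n le_rfl
    exact (csInf_le (hBdd.mono (greedyTail_subset _)) hx).trans_lt (hE (greedyTail_subset _ hx)).2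
  set γ := min (δ - η) (1 - δ - g n)
  have hγ : 0 < γ := lt_min (by linarith) (by linarith [hgap n le_rfl])
  have hpick : ∀ t, ∃ x, t ≤ n → x ∈ E ∧ g t ≤ x ∧ x < g t + γ := fun t => by
    by_cases ht : t ≤ n
    · have hne' : (greedyTail δ E t).Nonempty := by
        cases t with
        | zero => exact (hne 0 (Nat.zero_le n)).mono (greedyTail_subset 1)
        | succ t => exact hne t (by omega)
      obtain ⟨x, hx⟩ := exists_mem_greedyTail_lt hBdd hne' hγ
      exact ⟨x, fun _ => hx⟩
    · exact ⟨0, fun h => absurd h ht⟩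
  choose e he using hpick
  refine ⟨e, fun t ht => (he t ht).1, fun t ht => ?_, ?_⟩
  · linarith [(he t ht.le).2.2, (he (t + 1) ht).2.1, hgap t ht.le,
      min_le_left (δ - η) (1 - δ - g n)]
  · linarith [(he n le_rfl).2.2, min_le_right (δ - η) (1 - δ - g n)]

end Greedy

theorem two_mul_le_card_filter_le {α : Type*} [LinearOrder α] (S : Finset α) (e : ℕ → α)
    (n : ℕ) (h : ∀ t < n, ∃ a ∈ S, ∃ b ∈ S, e t < a ∧ a < b ∧ b ≤ e (t + 1)) :
    2 * n ≤ (S.filter (· ≤ e n)).card := by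
  induction n with
  | zero => simp
  | succ n ih =>
    obtain ⟨a, ha, b, hb, hna, hab, hbn⟩ := h n n.lt_succ_self
    have hsub : insert a (insert b (S.filter (· ≤ e n))) ⊆ S.filter (· ≤ e (n + 1)) := by
      intro x hx
      simp only [Finset.mem_insert, Finset.mem_filter] at hx ⊢
      rcases hx with rfl | rfl | ⟨hxS, hx⟩
      exacts [⟨ha, hab.le.trans hbn⟩, ⟨hb, hbn⟩, ⟨hxS, hx.trans (hna.trans hab).le |>.trans hbn⟩]
    have hb' : b ∉ S.filter (· ≤ e n) := by simp [(hna.trans hab)]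
    have ha' : a ∉ insert b (S.filter (· ≤ e n)) := by simp [hab.ne, hna]
    have := Finset.card_le_card hsub
    rw [Finset.card_insert_of_notMem ha', Finset.card_insert_of_notMem hb'] at this
    have := ih fun t ht => h t (by omega)
    omega

theorem IsPrivate.exists_le_length {N Y L : ℕ} {ε : ℝ} {φ : Strategy N Y}
    (hφ : IsPrivate ε (1 / L) L φ) (hY : 0 < Y) (hL : 2 ≤ L) (hεL : 2 * ε < 1 / L) :
    ∃ M : ℕ, 1 / L ≤ ε * 2 ^ M ∧ M + 2 * (L - 2) ≤ N := by
  classical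
  have hL' : (1 : ℝ) / L ≤ 1 := by
    rw [div_le_one (by positivity)]
    exact_mod_cast (by omega : 1 ≤ L)
  obtain ⟨x, hx, S, hS, hlen⟩ := hφ.1.exists_queries_mem_Ioo ⟨0, hY⟩ (a := 1 - 1 / L)
    (by linarith) (by simp [hL.trans_lt' two_pos]) le_rfl
  set q := φ.queries x ⟨0, hY⟩
  have hcov : L ≤ coverNumber (1 / L) (φ.infoSet q) :=
    hφ.2 x ⟨by linarith [hx.1], hx.2⟩ q ⟨_, rfl⟩
  obtain ⟨e, heE, hsep, hen⟩ := exists_separated_of_le_coverNumber hεL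
    (E := φ.infoSet q) (fun z hz => hz.1) (n := L - 2) (by omega)
  set Pin := Finset.univ.filter fun j => q j ∈ Ioo (1 - 1 / (L : ℝ)) 1
  set Pout := Finset.univ.filter fun j => q j ∉ Ioo (1 - 1 / (L : ℝ)) 1
  have hbelow := two_mul_le_card_filter_le (Finset.univ.image q) e (L - 2) fun t ht => by
    obtain ⟨j, j', h⟩ := hφ.1.exists_queries_between (heE t ht.le) (heE (t + 1) ht) (hsep t ht)
    exact ⟨q j, Finset.mem_image_of_mem q (Finset.mem_univ j),
      q j', Finset.mem_image_of_mem q (Finset.mem_univ j'), h⟩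
  have hsub : (Finset.univ.image q).filter (· ≤ e (L - 2)) ⊆ Pout.image q := fun w hw => by
    obtain ⟨hw, hwe⟩ := Finset.mem_filter.1 hw
    obtain ⟨j, -, rfl⟩ := Finset.mem_image.1 hw
    exact Finset.mem_image_of_mem q (Finset.mem_filter.2 ⟨Finset.mem_univ j,
      fun h => by linarith [h.1]⟩)
  have hout : 2 * (L - 2) ≤ Pout.card :=
    hbelow.trans ((Finset.card_le_card hsub).trans Finset.card_image_le)
  have hin : S.card ≤ Pin.card :=
    Finset.card_le_card fun j hj => Finset.mem_filter.2 ⟨Finset.mem_univ j, hS j hj⟩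
  have hN : Pin.card + Pout.card = N := by
    rw [Finset.card_filter_add_card_filter_not, Finset.card_univ, Fintype.card_fin]
  exact ⟨S.card, by linarith, by omega⟩

namespace SliverBisection

noncomputable def dyadicSum (u : ℕ → Bool) (t : ℕ) : ℝ :=
  ∑ r ∈ Finset.range t, if u r then (1 / 2 : ℝ) ^ (r + 1) else 0

theorem dyadicSum_nonneg (u : ℕ → Bool) (t : ℕ) : 0 ≤ dyadicSum u t :=
  Finset.sum_nonneg fun _ _ => by positivity

theorem dyadicSum_succ (u : ℕ → Bool) (t : ℕ) :
    dyadicSum u (t + 1) = dyadicSum u t + if u t then (1 / 2 : ℝ) ^ (t + 1) else 0 :=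
  Finset.sum_range_succ ..

theorem dyadicSum_add_pow_le (u : ℕ → Bool) (t : ℕ) : dyadicSum u t + (1 / 2 : ℝ) ^ t ≤ 1 := by
  induction t with
  | zero => simp [dyadicSum]
  | succ t ih =>
    rw [dyadicSum_succ, pow_succ]
    split <;> linarith [pow_pos (one_half_pos (α := ℝ)) t]

theorem dyadicSum_congr {u u' : ℕ → Bool} {t : ℕ} (h : ∀ r < t, u r = u' r) :
    dyadicSum u t = dyadicSum u' t :=
  Finset.sum_congr rfl fun r hr => by rw [h r (Finset.mem_range.1 hr)]

theorem dyadicSum_le_and_lt {s : ℝ} (hs : s ∈ Ico (0 : ℝ) 1) {u : ℕ → Bool} {T : ℕ}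
    (hu : ∀ t < T, u t = decide (dyadicSum u t + (1 / 2 : ℝ) ^ (t + 1) ≤ s)) :
    dyadicSum u T ≤ s ∧ s < dyadicSum u T + (1 / 2 : ℝ) ^ T := by
  induction T with
  | zero => simpa [dyadicSum] using hs
  | succ T ih =>
    obtain ⟨ih₁, ih₂⟩ := ih fun t ht => hu t (by omega)
    rw [dyadicSum_succ, hu T T.lt_succ_self]
    have h2 : (1 / 2 : ℝ) ^ T = (1 / 2) ^ (T + 1) + (1 / 2) ^ (T + 1) := by ring
    by_cases h : dyadicSum u T + (1 / 2 : ℝ) ^ (T + 1) ≤ s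
    · rw [decide_eq_true h, if_pos rfl]
      exact ⟨h, by linarith⟩
    · rw [decide_eq_false h, if_neg Bool.false_ne_true, add_zero]
      exact ⟨ih₁, by linarith⟩

variable (L M : ℕ) (ε : ℝ)

/-- The `t`-th bisection query inside the cell `[j / L, (j + 1) / L)`, given the answers `u`. -/
noncomputable def bisectPt (j : ℕ) (u : ℕ → Bool) (t : ℕ) : ℝ :=
  (j + dyadicSum u t + (1 / 2 : ℝ) ^ (t + 1)) / L

/-- The query sequence: `L - 1` cell boundaries `(i + 1) / L`, then the `L` sliver boundaries
`(j + 1) / L - ε`, then bisection of cell `p.1` along the answers `p.2`. -/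
noncomputable def plannedQuery (p : ℕ × (ℕ → Bool)) (k : ℕ) : ℝ :=
  if k < L - 1 then (k + 1 : ℝ) / L
  else if k < 2 * L - 1 then ((k + 2 - L : ℕ) : ℝ) / L - ε
  else bisectPt L p.1 p.2 (k - (2 * L - 1))

def cellIndex (g : ℕ → Bool) : ℕ := ((Finset.range (L - 1)).filter (g ·)).card

def inSliver (g : ℕ → Bool) : Bool := g (L - 1 + cellIndex L g)

/-- Bisect the cell of `x` along the true answers, unless `x` lies in a sliver; then bisect the
cell and follow the answers given by the seed `s`. -/
def plan (g : ℕ → Bool) (s : Fin L × (Fin M → Bool)) : ℕ × (ℕ → Bool) :=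
  if inSliver L g then (s.1, fun r => if h : r < M then s.2 ⟨r, h⟩ else false)
  else (cellIndex L g, fun r => g (2 * L - 1 + r))

noncomputable def estimateOf (g : ℕ → Bool) : ℝ :=
  if inSliver L g then (cellIndex L g + 1) / L - ε / 2
  else bisectPt L (cellIndex L g) (fun r => g (2 * L - 1 + r)) M

variable {L M ε}

theorem pos_of_two_mul_lt (hε : 0 < ε) (hεL : 2 * ε < 1 / L) : 0 < L := by
  rcases Nat.eq_zero_or_pos L with rfl | h
  · simp at hεL
    linarith
  · exact h

theorem bisectPt_mem {j : ℕ} (hj : j < L) (u : ℕ → Bool) (t : ℕ) :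
    bisectPt L j u t ∈ Ico (0 : ℝ) 1 := by
  have hL : (0 : ℝ) < L := by exact_mod_cast hj.trans_le' (Nat.zero_le j)
  have hjL : (j : ℝ) + 1 ≤ L := by exact_mod_cast hj
  have := dyadicSum_add_pow_le u t
  have := dyadicSum_nonneg u t
  have h2 : (1 / 2 : ℝ) ^ t = (1 / 2) ^ (t + 1) + (1 / 2) ^ (t + 1) := by ring
  have := pow_pos (one_half_pos (α := ℝ)) (t + 1)
  rw [bisectPt, mem_Ico, div_lt_one hL]
  exact ⟨by positivity, by linarith⟩

theorem plannedQuery_mem (hε : 0 < ε) (hεL : 2 * ε < 1 / L) {p : ℕ × (ℕ → Bool)} (hp : p.1 < L)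
    (k : ℕ) : plannedQuery L ε p k ∈ Ico (0 : ℝ) 1 := by
  have hL : (0 : ℝ) < L := Nat.cast_pos.2 (pos_of_two_mul_lt hε hεL)
  unfold plannedQuery
  split_ifs with h1 h2
  · rw [mem_Ico, div_lt_one hL]
    exact ⟨by positivity, by exact_mod_cast (by omega : k + 1 < L)⟩
  · have hm1 : (1 : ℝ) ≤ (k + 2 - L : ℕ) := by exact_mod_cast (by omega : 1 ≤ k + 2 - L)
    have hmL : ((k + 2 - L : ℕ) : ℝ) ≤ L := by exact_mod_cast (by omega : k + 2 - L ≤ L)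
    have : (1 : ℝ) / L ≤ (k + 2 - L : ℕ) / L := by gcongr
    have : ((k + 2 - L : ℕ) : ℝ) / L ≤ 1 := (div_le_one hL).2 hmL
    exact ⟨by linarith, by linarith⟩
  · exact bisectPt_mem hp _ _

theorem cellIndex_le (g : ℕ → Bool) : cellIndex L g ≤ L - 1 :=
  (Finset.card_filter_le _ _).trans (Finset.card_range _).le

theorem plan_fst_lt (hL : 0 < L) (g : ℕ → Bool) (s : Fin L × (Fin M → Bool)) :
    (plan L M g s).1 < L := by
  unfold plan
  split
  exacts [s.1.isLt, (cellIndex_le g).trans_lt (by omega)]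

theorem estimateOf_mem (hε : 0 < ε) (hεL : 2 * ε < 1 / L) (g : ℕ → Bool) :
    estimateOf L M ε g ∈ Ico (0 : ℝ) 1 := by
  have hL := pos_of_two_mul_lt hε hεL
  have hL' : (0 : ℝ) < L := Nat.cast_pos.2 hL
  unfold estimateOf
  split
  · have h1 : (1 : ℝ) / L ≤ (cellIndex L g + 1) / L := by gcongr; simp
    have h2 : ((cellIndex L g : ℝ) + 1) / L ≤ 1 := by
      rw [div_le_one hL']
      exact_mod_cast (by have := cellIndex_le (L := L) g; omega : cellIndex L g + 1 ≤ L)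
    exact ⟨by linarith, by linarith⟩
  · exact bisectPt_mem ((cellIndex_le g).trans_lt (by omega)) _ _

variable (L M ε) in
noncomputable def strategy (hε : 0 < ε) (hεL : 2 * ε < 1 / L) :
    Strategy (2 * L - 1 + M) (Fintype.card (Fin L × (Fin M → Bool))) where
  query k h y := plannedQuery L ε (plan L M (extendFalse h) ((Fintype.equivFin _).symm y)) k
  estimate h _ := estimateOf L M ε (extendFalse h)
  query_mem _ _ _ := plannedQuery_mem hε hεL (plan_fst_lt (pos_of_two_mul_lt hε hεL) _ _) _
  estimate_mem _ _ := estimateOf_mem hε hεL _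

theorem plannedQuery_of_lt {p : ℕ × (ℕ → Bool)} {i : ℕ} (hi : i < L - 1) :
    plannedQuery L ε p i = (i + 1 : ℝ) / L :=
  if_pos hi

theorem plannedQuery_sliver (hL : 0 < L) (p : ℕ × (ℕ → Bool)) {j : ℕ} (hj : j < L) :
    plannedQuery L ε p (L - 1 + j) = (j + 1 : ℝ) / L - ε := by
  rw [plannedQuery, if_neg (by omega), if_pos (by omega), show L - 1 + j + 2 - L = j + 1 by omega]
  push_cast
  rfl

theorem plannedQuery_bisect (p : ℕ × (ℕ → Bool)) (t : ℕ) :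
    plannedQuery L ε p (2 * L - 1 + t) = bisectPt L p.1 p.2 t := by
  rw [plannedQuery, if_neg (by omega), if_neg (by omega), Nat.add_sub_cancel_left]

theorem plannedQuery_congr {p p' : ℕ × (ℕ → Bool)} {k : ℕ} (h₁ : 2 * L - 1 ≤ k → p.1 = p'.1)
    (h₂ : ∀ r < k - (2 * L - 1), p.2 r = p'.2 r) :
    plannedQuery L ε p k = plannedQuery L ε p' k := by
  unfold plannedQuery
  split_ifs
  · rfl
  · rfl
  · rw [bisectPt, bisectPt, h₁ (by omega), dyadicSum_congr h₂]

theorem cellIndex_congr {g g' : ℕ → Bool} (h : ∀ i < L - 1, g i = g' i) :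
    cellIndex L g = cellIndex L g' :=
  congrArg Finset.card <| Finset.filter_congr fun i hi => by rw [h i (Finset.mem_range.1 hi)]

theorem inSliver_congr (hL : 0 < L) {g g' : ℕ → Bool} (h : ∀ i < 2 * L - 1, g i = g' i) :
    inSliver L g = inSliver L g' := by
  rw [inSliver, inSliver, cellIndex_congr fun i hi => h i (by omega)]
  exact h _ (by have := cellIndex_le (L := L) g'; omega)

theorem plannedQuery_plan_congr (hL : 0 < L) {g g' : ℕ → Bool} {k : ℕ}
    (h : ∀ i < k, g i = g' i) (s : Fin L × (Fin M → Bool)) :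
    plannedQuery L ε (plan L M g s) k = plannedQuery L ε (plan L M g' s) k := by
  by_cases hk : 2 * L - 1 ≤ k
  · rw [plan, plan, inSliver_congr hL fun i hi => h i (by omega),
      cellIndex_congr fun i hi => h i (by omega)]
    split
    · rfl
    · exact plannedQuery_congr (fun _ => rfl) fun r hr => h _ (by omega)
  · exact plannedQuery_congr (fun h' => absurd h' hk) fun r hr => by omega

theorem bisectPt_le_iff (hL : 0 < L) {j : ℕ} {u : ℕ → Bool} {t : ℕ} {x : ℝ} :
    bisectPt L j u t ≤ x ↔ dyadicSum u t + (1 / 2 : ℝ) ^ (t + 1) ≤ L * x - j := by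
  rw [bisectPt, div_le_iff₀ (Nat.cast_pos.2 hL)]
  constructor <;> intro <;> linarith

section Answers

variable {g : ℕ → Bool} {s : Fin L × (Fin M → Bool)} {x : ℝ}

theorem cellIndex_eq_floor (hL : 0 < L) (hx : x ∈ Ico (0 : ℝ) 1)
    (hg : ∀ k < 2 * L - 1 + M, g k = decide (plannedQuery L ε (plan L M g s) k ≤ x)) :
    cellIndex L g = ⌊L * x⌋₊ := by
  have hL' : (0 : ℝ) < L := Nat.cast_pos.2 hL
  have hLx : 0 ≤ (L : ℝ) * x := mul_nonneg hL'.le hx.1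
  have hfl : ⌊(L : ℝ) * x⌋₊ < L := (Nat.floor_lt hLx).2 (by nlinarith [hx.2])
  have key : ∀ i : ℕ, i < ⌊(L : ℝ) * x⌋₊ ↔ (i + 1 : ℝ) / L ≤ x := fun i => by
    rw [div_le_iff₀ hL', ← Nat.add_one_le_iff, Nat.le_floor_iff hLx, mul_comm]
    push_cast
    rfl
  rw [cellIndex, ← Finset.card_range ⌊(L : ℝ) * x⌋₊]
  congr 1
  ext i
  simp only [Finset.mem_filter, Finset.mem_range]
  constructor
  · rintro ⟨hi, hgi⟩
    rw [hg i (by omega), plannedQuery_of_lt hi, decide_eq_true_iff] at hgi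
    exact (key i).2 hgi
  · intro hi
    refine ⟨by omega, ?_⟩
    rw [hg i (by omega), plannedQuery_of_lt (by omega)]
    exact decide_eq_true ((key i).1 hi)

theorem inSliver_eq (hL : 0 < L) (hx : x ∈ Ico (0 : ℝ) 1)
    (hg : ∀ k < 2 * L - 1 + M, g k = decide (plannedQuery L ε (plan L M g s) k ≤ x)) :
    inSliver L g = decide ((⌊L * x⌋₊ + 1 : ℝ) / L - ε ≤ x) := by
  have hL' : (0 : ℝ) < L := Nat.cast_pos.2 hL
  have hfl : ⌊(L : ℝ) * x⌋₊ < L := (Nat.floor_lt (mul_nonneg hL'.le hx.1)).2 (by nlinarith [hx.2])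
  rw [inSliver, cellIndex_eq_floor hL hx hg, hg _ (by omega), plannedQuery_sliver hL _ hfl]

theorem plan_of_not_inSliver (hL : 0 < L) (hx : x ∈ Ico (0 : ℝ) 1)
    (hg : ∀ k < 2 * L - 1 + M, g k = decide (plannedQuery L ε (plan L M g s) k ≤ x))
    (hsl : ¬ (⌊L * x⌋₊ + 1 : ℝ) / L - ε ≤ x) :
    plan L M g s = (⌊L * x⌋₊, fun r => g (2 * L - 1 + r)) := by
  rw [plan, inSliver_eq hL hx hg, decide_eq_false hsl, if_neg Bool.false_ne_true,
    cellIndex_eq_floor hL hx hg]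

end Answers

theorem floor_eq_of_mem_sliver (hL : 0 < L) (hεL : 2 * ε < 1 / L) {j : ℕ} {z : ℝ}
    (hz : z ∈ Ioo ((j + 1 : ℝ) / L - ε) ((j + 1) / L)) :
    ⌊L * z⌋₊ = j := by
  have hL' : (0 : ℝ) < L := Nat.cast_pos.2 hL
  have hLε : L * ε < 1 / 2 := by
    rw [lt_div_iff₀ hL'] at hεL
    nlinarith
  have h₁ : (j + 1 : ℝ) - L * ε < L * z := by
    have := hz.1
    rw [sub_lt_iff_lt_add, div_lt_iff₀ hL'] at this
    nlinarith
  have h₂ : (L : ℝ) * z < j + 1 := by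
    have := hz.2
    rw [lt_div_iff₀ hL'] at this
    linarith
  rw [Nat.floor_eq_iff (by linarith [Nat.cast_nonneg (α := ℝ) j])]
  constructor <;> linarith

variable (hε : 0 < ε) (hεL : 2 * ε < 1 / L)

theorem queries_strategy (x : ℝ) (y : Fin (Fintype.card (Fin L × (Fin M → Bool))))
    (k : Fin (2 * L - 1 + M)) :
    (strategy L M ε hε hεL).queries x y k = plannedQuery L ε
      (plan L M ((strategy L M ε hε hεL).respSeq x y) ((Fintype.equivFin _).symm y)) k :=
  plannedQuery_plan_congr (pos_of_two_mul_lt hε hεL)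
    (fun _ hi => Strategy.extendFalse_resps _ hi k.isLt.le) _

theorem respSeq_strategy (x : ℝ) (y : Fin (Fintype.card (Fin L × (Fin M → Bool)))) :
    ∀ k < 2 * L - 1 + M, (strategy L M ε hε hεL).respSeq x y k = decide (plannedQuery L ε
      (plan L M ((strategy L M ε hε hεL).respSeq x y) ((Fintype.equivFin _).symm y)) k ≤ x) :=
  fun k hk => by rw [Strategy.respSeq_of_lt _ hk, queries_strategy]

theorem strategy_accurate (hM : 1 / L ≤ ε * 2 ^ M) : (strategy L M ε hε hεL).Accurate ε := by
  intro x hx y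
  have hL := pos_of_two_mul_lt hε hεL
  have hL' : (0 : ℝ) < L := Nat.cast_pos.2 hL
  have hg := respSeq_strategy hε hεL x y
  set g := (strategy L M ε hε hεL).respSeq x y
  set j := ⌊(L : ℝ) * x⌋₊
  have hj₁ : (j : ℝ) ≤ L * x := Nat.floor_le (mul_nonneg hL'.le hx.1)
  have hj₂ : (L : ℝ) * x < j + 1 := Nat.lt_floor_add_one _
  show |estimateOf L M ε g - x| ≤ ε / 2
  rw [estimateOf, inSliver_eq hL hx hg, cellIndex_eq_floor hL hx hg]
  by_cases hsl : (j + 1 : ℝ) / L - ε ≤ x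
  · have : x < (j + 1 : ℝ) / L := by rw [lt_div_iff₀ hL']; linarith
    rw [decide_eq_true hsl, if_pos rfl, abs_le]
    constructor <;> linarith
  · rw [decide_eq_false hsl, if_neg Bool.false_ne_true]
    obtain ⟨hD₁, hD₂⟩ := dyadicSum_le_and_lt (T := M) (s := L * x - j)
      (u := fun r => g (2 * L - 1 + r)) ⟨by linarith, by linarith⟩
      fun t ht => by
        rw [hg _ (by omega), plan_of_not_inSliver hL hx hg hsl, plannedQuery_bisect]
        exact decide_eq_decide.2 (bisectPt_le_iff hL)
    have hpow : (1 / 2 : ℝ) ^ M ≤ ε * L := by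
      rw [div_pow, one_pow, div_le_iff₀ (by positivity)]
      rw [div_le_iff₀ hL'] at hM
      linarith
    have hsplit : (1 / 2 : ℝ) ^ M = (1 / 2) ^ (M + 1) + (1 / 2) ^ (M + 1) := by ring
    have : bisectPt L j (fun r => g (2 * L - 1 + r)) M - x =
        (j + dyadicSum (fun r => g (2 * L - 1 + r)) M + (1 / 2 : ℝ) ^ (M + 1) - L * x) / L := by
      rw [bisectPt]
      field_simp
    rw [this, abs_div, abs_of_pos hL', div_le_iff₀ hL', abs_le]
    constructor <;> linarith

theorem sliver_subset_infoSet {p : ℕ × (ℕ → Bool)} (hp : p.1 < L) {j : ℕ} (hj : j < L) :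
    Ioo ((j + 1 : ℝ) / L - ε) ((j + 1) / L) ⊆
      (strategy L M ε hε hεL).infoSet fun k => plannedQuery L ε p k := by
  intro z hz
  have hL := pos_of_two_mul_lt hε hεL
  have hL' : (0 : ℝ) < L := Nat.cast_pos.2 hL
  have hz₀ : 0 < z := by
    have : (1 : ℝ) / L ≤ (j + 1) / L := by gcongr; simp
    linarith [hz.1]
  have hz₁ : z < 1 := hz.2.trans_le ((div_le_one hL').2 (by exact_mod_cast hj))
  have hzI : z ∈ Ico (0 : ℝ) 1 := ⟨hz₀.le, hz₁⟩
  let y : Fin (Fintype.card (Fin L × (Fin M → Bool))) :=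
    Fintype.equivFin _ (⟨p.1, hp⟩, fun t => p.2 t)
  refine ⟨hzI, y, funext fun k => ?_⟩
  have hg := respSeq_strategy hε hεL z y
  rw [queries_strategy, plan, inSliver_eq hL hzI hg, floor_eq_of_mem_sliver hL hεL hz,
    decide_eq_true hz.1.le, if_pos rfl, Equiv.symm_apply_apply]
  exact plannedQuery_congr (fun _ => rfl) fun r hr => dif_pos (by omega)

theorem strategy_isPrivate (hM : 1 / L ≤ ε * 2 ^ M) :
    IsPrivate ε (1 / L) L (strategy L M ε hε hεL) := by
  have hL := pos_of_two_mul_lt hε hεL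
  refine ⟨strategy_accurate hε hεL hM, fun x _ q ⟨y, hy⟩ => ?_⟩
  rw [← hy, funext (queries_strategy hε hεL x y)]
  refine le_coverNumber_of_frequently ⟨L, hL, coverable_of_subset_Ico hL fun z hz => hz.1⟩
    (fun j => ((j : ℕ) + 1 : ℝ) / L) (fun i j hij => ?_) fun j => ?_
  · rw [← add_div]
    gcongr
    exact_mod_cast (hij : (i : ℕ) < j)
  · refine Eventually.frequently (mem_of_superset
      (Ioo_mem_nhdsLT (a := ((j : ℕ) + 1 : ℝ) / L - ε) (by linarith)) ?_)
    exact sliver_subset_infoSet hε hεL (plan_fst_lt hL _ _) j.isLt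

end SliverBisection

theorem exists_isPrivate {L M : ℕ} {ε : ℝ} (hε : 0 < ε) (hεL : 2 * ε < 1 / L)
    (hM : 1 / L ≤ ε * 2 ^ M) :
    ∃ Y, 0 < Y ∧ ∃ φ : Strategy (2 * L - 1 + M) Y, IsPrivate ε (1 / L) L φ :=
  ⟨_, Fintype.card_pos_iff.2 ⟨(⟨0, SliverBisection.pos_of_two_mul_lt hε hεL⟩, fun _ => false)⟩,
    _, SliverBisection.strategy_isPrivate hε hεL hM⟩

/-- for `L ≥ 3` and `δ = 1/L`,
`⌈log₂(1/(Lε))⌉ + 2L − 4 ≤ N*(ε, 1/L, L) ≤ ⌈log₂(1/(Lε))⌉ + 2L`. -/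
theorem query_complexity_L_ge_three (ε : ℝ) (L : ℕ) (hL : 3 ≤ L)
    (hε : 0 < ε) (h : 2 * ε < 1 / (L : ℝ)) :
    ⌈Real.logb 2 (1 / ((L : ℝ) * ε))⌉ + 2 * (L : ℤ) - 4 ≤ (Nstar ε (1 / (L : ℝ)) L : ℤ) ∧
    (Nstar ε (1 / (L : ℝ)) L : ℤ) ≤ ⌈Real.logb 2 (1 / ((L : ℝ) * ε))⌉ + 2 * (L : ℤ) := by
  have hL' : (0 : ℝ) < L := by positivity
  have hX : 0 < 1 / ((L : ℝ) * ε) := by positivity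
  rw [show (2 : ℝ) = ((2 : ℕ) : ℝ) by norm_num, Real.ceil_logb_natCast hX.le]
  set c := Int.clog 2 (1 / ((L : ℝ) * ε))
  have hc : ∀ M : ℕ, 1 / (L : ℝ) ≤ ε * 2 ^ M ↔ c ≤ M := fun M => by
    rw [← Int.le_zpow_iff_clog_le one_lt_two hX, zpow_natCast, Nat.cast_ofNat,
      div_le_iff₀ hL', div_le_iff₀ (by positivity)]
    constructor <;> intro <;> linarith
  have hc₁ : 1 < c := by
    rw [← Int.zpow_lt_iff_lt_clog one_lt_two hX, zpow_one, Nat.cast_ofNat,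
      lt_div_iff₀ (by positivity)]
    rw [lt_div_iff₀ hL'] at h
    linarith
  obtain ⟨Y, hY, φ, hφ⟩ := exists_isPrivate hε h ((hc _).2 (Int.self_le_toNat c))
  have hub : Nstar ε (1 / L) L ≤ 2 * L - 1 + c.toNat := Nat.sInf_le ⟨Y, hY, φ, hφ⟩
  obtain ⟨Y', hY', φ', hφ'⟩ : ∃ Y, 0 < Y ∧ ∃ φ : Strategy (Nstar ε (1 / L) L) Y,
      IsPrivate ε (1 / L) L φ :=
    Nat.sInf_mem (s := {N | ∃ Y, 0 < Y ∧ ∃ φ : Strategy N Y, IsPrivate ε (1 / L) L φ})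
      ⟨_, Y, hY, φ, hφ⟩
  obtain ⟨M, hM, hMN⟩ := hφ'.exists_le_length hY' (by omega) h
  have := (hc M).1 hM
  omega
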